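/- arXiv:1304.3193 — 2 statements merged into one kernel-verified Lean document; each statement's English description precedes it below -/
import Mathlib

section
/- Let S, Sa, A1, A2, B1, B2 be subsets of a type with Sa ⊆ S, S = A1 ∪ A2, A1 ∩ A2 = ∅, A1 ⊆ B1, B2 ⊆ A2, and B1 ∪ B2 ⊆ Sa. Then (Sa = B1 ∪ B2 and B1 ∩ B2 = ∅) if and only if A2 \ B2 = (B1 \ A1) ∪ (S \ Sa) with (B1 \ A1) ∩ (S \ Sa) = ∅. -/
set_option maxHeartbeats 2000000


theorem a_partition_transfer {α : Type*} (S Sa A1 A2 B1 B2 : Set α)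
    (hSaS : Sa ⊆ S) (hS : S = A1 ∪ A2) (hA : A1 ∩ A2 = ∅)
    (hAB : A1 ⊆ B1) (hBA : B2 ⊆ A2) (hBSa : B1 ∪ B2 ⊆ Sa) :
    (Sa = B1 ∪ B2 ∧ B1 ∩ B2 = ∅) ↔
      (A2 \ B2 = (B1 \ A1) ∪ (S \ Sa) ∧ (B1 \ A1) ∩ (S \ Sa) = ∅) := by
  simp only [Set.ext_iff, Set.subset_def, Set.mem_union, Set.mem_inter_iff, Set.mem_diff,
    Set.mem_empty_iff_false, iff_false, not_and] at *
  constructor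
  · rintro ⟨h1, h2⟩
    constructor
    · intro x
      have := hSaS x; have := hS x; have := hA x; have := hAB x; have := hBA x
      have := hBSa x; have := h1 x; have := h2 x
      tauto
    · intro x
      have := hSaS x; have := hS x; have := hA x; have := hAB x; have := hBA x
      have := hBSa x; have := h1 x; have := h2 x
      tauto
  · rintro ⟨h1, h2⟩
    constructor
    · intro x
      have := hSaS x; have := hS x; have := hA x; have := hAB x; have := hBA x
      have := hBSa x; have := h1 x; have := h2 x
      tauto
    · intro x
      have := hSaS x; have := hS x; have := hA x; have := hAB x; have := hBA x
      have := hBSa x; have := h1 x; have := h2 x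
      tauto
end

section
/- Let T be a bounded linear operator on a complex Banach space X. If σ(T) is the disjoint union of the B-Weyl spectrum σ_BW(T) and the set E(T) of isolated eigenvalues of T, then σ(T) is the disjoint union of the Weyl spectrum σ_W(T) and the set E^0(T) of isolated eigenvalues of finite multiplicity. -/
open LinearMap Module

namespace SpectralPartition

variable {X : Type*} [NormedAddCommGroup X] [NormedSpace ℂ X] [CompleteSpace X]

/-- `T - λ I`. -/
noncomputable def lam (T : X →L[ℂ] X) (l : ℂ) : X →L[ℂ] X := T - l • (1 : X →L[ℂ] X)

/-- `T` maps the range of `T ^ n` into itself. -/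
theorem maps_range_pow (T : X →L[ℂ] X) (n : ℕ) :
    ∀ x ∈ LinearMap.range ((T ^ n : X →L[ℂ] X) : X →ₗ[ℂ] X), (T : X →ₗ[ℂ] X) x ∈ LinearMap.range ((T ^ n : X →L[ℂ] X) : X →ₗ[ℂ] X) := by
  rintro x ⟨y, rfl⟩
  refine ⟨T y, ?_⟩
  have h : T ^ n * T = T * T ^ n := by rw [← pow_succ, ← pow_succ']
  calc (T ^ n) (T y) = (T ^ n * T) y := (ContinuousLinearMap.mul_apply _ _ _).symm
    _ = (T * T ^ n) y := by rw [h]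
    _ = T ((T ^ n) y) := ContinuousLinearMap.mul_apply _ _ _

/-- The restriction `T_[n]` of `T` to the range of `T ^ n`. -/
noncomputable def restr (T : X →L[ℂ] X) (n : ℕ) :
    LinearMap.range ((T ^ n : X →L[ℂ] X) : X →ₗ[ℂ] X) →ₗ[ℂ] LinearMap.range ((T ^ n : X →L[ℂ] X) : X →ₗ[ℂ] X) :=
  (T : X →ₗ[ℂ] X).restrict (maps_range_pow T n)

/-- Weyl operator: Fredholm of index `0`. -/
def IsWeyl (T : X →L[ℂ] X) : Prop :=
  IsClosed ((LinearMap.range (T : X →ₗ[ℂ] X) : Submodule ℂ X) : Set X) ∧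
  FiniteDimensional ℂ (LinearMap.ker (T : X →ₗ[ℂ] X)) ∧
  FiniteDimensional ℂ (X ⧸ LinearMap.range (T : X →ₗ[ℂ] X)) ∧
  finrank ℂ (LinearMap.ker (T : X →ₗ[ℂ] X)) = finrank ℂ (X ⧸ LinearMap.range (T : X →ₗ[ℂ] X))

/-- B-Weyl operator: for some `n`, `R(T^n)` is closed and `T_[n]` is Fredholm of index `0`. -/
def IsBWeyl (T : X →L[ℂ] X) : Prop :=
  ∃ n : ℕ, IsClosed ((LinearMap.range ((T ^ n : X →L[ℂ] X) : X →ₗ[ℂ] X) : Submodule ℂ X) : Set X) ∧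
    IsClosed ((LinearMap.range ((T ^ (n + 1) : X →L[ℂ] X) : X →ₗ[ℂ] X) : Submodule ℂ X) : Set X) ∧
    FiniteDimensional ℂ (LinearMap.ker (restr T n)) ∧
    FiniteDimensional ℂ (↥(LinearMap.range ((T ^ n : X →L[ℂ] X) : X →ₗ[ℂ] X)) ⧸ LinearMap.range (restr T n)) ∧
    finrank ℂ (LinearMap.ker (restr T n)) =
      finrank ℂ (↥(LinearMap.range ((T ^ n : X →L[ℂ] X) : X →ₗ[ℂ] X)) ⧸ LinearMap.range (restr T n))

/-- Weyl spectrum. -/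
noncomputable def σW (T : X →L[ℂ] X) : Set ℂ := {l | ¬ IsWeyl (lam T l)}

/-- B-Weyl spectrum. -/
noncomputable def σBW (T : X →L[ℂ] X) : Set ℂ := {l | ¬ IsBWeyl (lam T l)}

/-- `l` is an isolated point of the set `s`. -/
def IsolatedIn (l : ℂ) (s : Set ℂ) : Prop := l ∈ s ∧ ∃ U ∈ nhds l, U ∩ s = {l}

/-- Approximate point spectrum: `T - λ` is not bounded below. -/
noncomputable def σa (T : X →L[ℂ] X) : Set ℂ :=
  {l | ¬ ∃ c > (0 : ℝ), ∀ x : X, c * ‖x‖ ≤ ‖lam T l x‖}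

/-- Eigenvalues of `T` isolated in the spectrum. -/
noncomputable def Espec (T : X →L[ℂ] X) : Set ℂ :=
  {l | LinearMap.ker (lam T l : X →ₗ[ℂ] X) ≠ ⊥ ∧ IsolatedIn l (spectrum ℂ T)}

/-- Eigenvalues of finite multiplicity isolated in the spectrum. -/
noncomputable def E0spec (T : X →L[ℂ] X) : Set ℂ :=
  {l | l ∈ Espec T ∧ FiniteDimensional ℂ (LinearMap.ker (lam T l : X →ₗ[ℂ] X))}

/-- Eigenvalues of `T` isolated in the approximate point spectrum. -/
noncomputable def Ea (T : X →L[ℂ] X) : Set ℂ :=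
  {l | LinearMap.ker (lam T l : X →ₗ[ℂ] X) ≠ ⊥ ∧ IsolatedIn l (σa T)}

/-- Eigenvalues of finite multiplicity isolated in the approximate point spectrum. -/
noncomputable def Ea0 (T : X →L[ℂ] X) : Set ℂ :=
  {l | l ∈ Ea T ∧ FiniteDimensional ℂ (LinearMap.ker (lam T l : X →ₗ[ℂ] X))}

/-- The kernels of powers of `S` stabilize at `n` (ascent ≤ n). -/
def KerStab (S : X →L[ℂ] X) (n : ℕ) : Prop :=
  LinearMap.ker ((S ^ n : X →L[ℂ] X) : X →ₗ[ℂ] X) = LinearMap.ker ((S ^ (n + 1) : X →L[ℂ] X) : X →ₗ[ℂ] X)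

/-- The ranges of powers of `S` stabilize at `n` (descent ≤ n). -/
def RanStab (S : X →L[ℂ] X) (n : ℕ) : Prop :=
  LinearMap.range ((S ^ n : X →L[ℂ] X) : X →ₗ[ℂ] X) = LinearMap.range ((S ^ (n + 1) : X →L[ℂ] X) : X →ₗ[ℂ] X)

/-- Drazin invertible: finite ascent and finite descent. -/
def IsDrazinInv (S : X →L[ℂ] X) : Prop :=
  (∃ n, KerStab S n) ∧ (∃ n, RanStab S n)

/-- `l` is a pole of the resolvent of `T`. -/
noncomputable def IsPole (T : X →L[ℂ] X) (l : ℂ) : Prop :=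
  l ∈ spectrum ℂ T ∧ IsDrazinInv (lam T l)

/-- Set of poles of the resolvent of `T`. -/
noncomputable def Poles (T : X →L[ℂ] X) : Set ℂ := {l | IsPole T l}

/-- Set of poles of finite rank of `T`. -/
noncomputable def Poles0 (T : X →L[ℂ] X) : Set ℂ :=
  {l | IsPole T l ∧ FiniteDimensional ℂ (LinearMap.ker (lam T l : X →ₗ[ℂ] X))}

/-- Drazin spectrum. -/
noncomputable def σD (T : X →L[ℂ] X) : Set ℂ := {l | ¬ IsDrazinInv (lam T l)}

/-- Browder operator: Fredholm of finite ascent and descent. -/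
def IsBrowder (S : X →L[ℂ] X) : Prop :=
  IsClosed ((LinearMap.range (S : X →ₗ[ℂ] X) : Submodule ℂ X) : Set X) ∧
  FiniteDimensional ℂ (LinearMap.ker (S : X →ₗ[ℂ] X)) ∧
  FiniteDimensional ℂ (X ⧸ LinearMap.range (S : X →ₗ[ℂ] X)) ∧
  (∃ n, KerStab S n) ∧ (∃ n, RanStab S n)

/-- Browder spectrum. -/
noncomputable def σB (T : X →L[ℂ] X) : Set ℂ := {l | ¬ IsBrowder (lam T l)}

/-- Upper semi-Weyl: upper semi-Fredholm with index ≤ 0. -/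
def IsUpperSemiWeyl (S : X →L[ℂ] X) : Prop :=
  IsClosed ((LinearMap.range (S : X →ₗ[ℂ] X) : Submodule ℂ X) : Set X) ∧
  FiniteDimensional ℂ (LinearMap.ker (S : X →ₗ[ℂ] X)) ∧
  Module.rank ℂ (LinearMap.ker (S : X →ₗ[ℂ] X)) ≤ Module.rank ℂ (X ⧸ LinearMap.range (S : X →ₗ[ℂ] X))

/-- Upper semi-Weyl spectrum `σ_{SF₊⁻}`. -/
noncomputable def σSF (T : X →L[ℂ] X) : Set ℂ := {l | ¬ IsUpperSemiWeyl (lam T l)}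

/-- Upper semi-B-Weyl: for some `n`, `R(S^n)` is closed and `S_[n]` is
upper semi-Fredholm with index ≤ 0. -/
def IsUpperSemiBWeyl (S : X →L[ℂ] X) : Prop :=
  ∃ n : ℕ, IsClosed ((LinearMap.range ((S ^ n : X →L[ℂ] X) : X →ₗ[ℂ] X) : Submodule ℂ X) : Set X) ∧
    IsClosed ((LinearMap.range ((S ^ (n + 1) : X →L[ℂ] X) : X →ₗ[ℂ] X) : Submodule ℂ X) : Set X) ∧
    FiniteDimensional ℂ (LinearMap.ker (restr S n)) ∧
    Module.rank ℂ (LinearMap.ker (restr S n)) ≤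
      Module.rank ℂ (↥(LinearMap.range ((S ^ n : X →L[ℂ] X) : X →ₗ[ℂ] X)) ⧸ LinearMap.range (restr S n))

/-- Upper semi-B-Weyl spectrum `σ_{SBF₊⁻}`. -/
noncomputable def σSBF (T : X →L[ℂ] X) : Set ℂ := {l | ¬ IsUpperSemiBWeyl (lam T l)}

/-- `l` is a left pole of `T`: `l ∈ σ_a(T)`, the ascent `a` of `T - l` is finite
and `R((T-l)^{a+1})` is closed. -/
noncomputable def IsLeftPole (T : X →L[ℂ] X) (l : ℂ) : Prop :=
  l ∈ σa T ∧ ∃ n : ℕ, KerStab (lam T l) n ∧ (∀ m < n, ¬ KerStab (lam T l) m) ∧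
    IsClosed ((LinearMap.range (((lam T l) ^ (n + 1) : X →L[ℂ] X) : X →ₗ[ℂ] X) : Submodule ℂ X) : Set X)

/-- Set of left poles of `T`. -/
noncomputable def PolesA (T : X →L[ℂ] X) : Set ℂ := {l | IsLeftPole T l}

/-- Set of left poles of `T` of finite rank. -/
noncomputable def PolesA0 (T : X →L[ℂ] X) : Set ℂ :=
  {l | IsLeftPole T l ∧ FiniteDimensional ℂ (LinearMap.ker (lam T l : X →ₗ[ℂ] X))}

end SpectralPartition

/-!
A Weyl operator is B-Weyl (take `n = 0`), so a point of `σ(T) \ σ_W(T)` lies outside `σ_BW(T)`,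
hence in `E(T)`, and its kernel is finite-dimensional. Conversely, let `S = T - λ` be B-Weyl at `n`
with `N(S)` finite-dimensional. Since `S` maps `R(S^m)/R(S^(m+1))` onto `R(S^(m+1))/R(S^(m+2))`
with kernel `(N(S) ∩ R(S^m))/(N(S) ∩ R(S^(m+1)))`, the index of `S` restricted to `R(S^m)` does
not depend on `m`, so `S` has index `0`; and `R(S)` contains the closed subspace `R(S^(n+1))`,
which has finite codimension, so `R(S)` is closed.
-/

open LinearMap Module Submodule Cardinal

universe u

section LinearAlgebra

variable {K : Type*} {V W : Type u} [DivisionRing K] [AddCommGroup V] [Module K V]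
  [AddCommGroup W] [Module K W]

theorem Submodule.rank_map_mkQ_add_rank_inf (B C : Submodule K V) :
    Module.rank K (C.map B.mkQ) + Module.rank K ↥(C ⊓ B) = Module.rank K C := by
  have h := (B.mkQ.domRestrict C).rank_range_add_rank_ker
  rwa [range_domRestrict, ker_domRestrict, ker_mkQ, ← rank_map_eq C.injective_subtype,
    map_comap_subtype] at h

theorem LinearMap.rank_map_mkQ_add_rank_ker_inf (f : V →ₗ[K] W) {A B : Submodule K V}
    (hBA : B ≤ A) :
    Module.rank K (A.map B.mkQ) + Module.rank K ↥(ker f ⊓ B) =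
      Module.rank K ((A.map f).map (B.map f).mkQ) + Module.rank K ↥(ker f ⊓ A) := by
  set g := B.mapQ (B.map f) f (le_comap_map f B)
  have hrange : (A.map B.mkQ).map g = (A.map f).map (B.map f).mkQ := by
    rw [← map_comp, mapQ_mkQ, map_comp]
  have hker : ker g ⊓ A.map B.mkQ = (ker f ⊓ A).map B.mkQ := by
    apply comap_injective_of_surjective B.mkQ_surjective
    rw [comap_inf, ker_mapQ, comap_map_mkQ, comap_map_mkQ, comap_map_mkQ, comap_map_eq,
      ← sup_assoc, sup_idem, sup_eq_right.mpr hBA, sup_inf_assoc_of_le _ hBA]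
  have hnull := (g.domRestrict (A.map B.mkQ)).rank_range_add_rank_ker
  rw [range_domRestrict, hrange, ker_domRestrict, ← rank_map_eq (A.map B.mkQ).injective_subtype,
    map_comap_subtype, inf_comm, hker] at hnull
  rw [← hnull, ← rank_map_mkQ_add_rank_inf B (ker f ⊓ A), add_assoc, inf_assoc,
    inf_of_le_right hBA]

theorem LinearMap.rank_ker_restrict (f : Module.End K V) {p : Submodule K V}
    (hp : ∀ x ∈ p, f x ∈ p) :
    Module.rank K (ker (f.restrict hp)) = Module.rank K ↥(ker f ⊓ p) := by
  rw [ker_restrict, ← rank_map_eq p.injective_subtype, map_comap_subtype, inf_comm]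

theorem LinearMap.rank_quotient_range_restrict (f : Module.End K V) {p : Submodule K V}
    (hp : ∀ x ∈ p, f x ∈ p) :
    Module.rank K (p ⧸ range (f.restrict hp)) = Module.rank K (p.map (p.map f).mkQ) := by
  have e := ((p.map f).mkQ.domRestrict p).quotKerEquivRange
  rw [ker_domRestrict, ker_mkQ, range_domRestrict] at e
  rw [range_restrict, e.rank_eq]

theorem LinearMap.map_range_pow (f : Module.End K V) (n : ℕ) :
    (range (f ^ n)).map f = range (f ^ (n + 1)) := by
  rw [pow_succ', Module.End.mul_eq_comp, range_comp]

theorem LinearMap.range_pow_le_range_pow (f : Module.End K V) {m n : ℕ} (h : m ≤ n) :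
    range (f ^ n) ≤ range (f ^ m) :=
  f.iterateRange.monotone h

theorem LinearMap.range_pow_zero (f : Module.End K V) : range (f ^ 0) = ⊤ := by
  rw [pow_zero, Module.End.one_eq_id, range_id]

theorem Submodule.rank_map_mkQ_top (p : Submodule K V) :
    Module.rank K ((⊤ : Submodule K V).map p.mkQ) = Module.rank K (V ⧸ p) := by
  rw [map_top, range_mkQ, rank_top]

theorem Cardinal.add_eq_add_of_forall_add_succ_eq {a k : ℕ → Cardinal} (hk : ∀ m, k m < ℵ₀)
    (h : ∀ m, a m + k (m + 1) = a (m + 1) + k m) (n : ℕ) : a 0 + k n = a n + k 0 := by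
  induction n with
  | zero => rfl
  | succ n ih =>
    rw [← add_right_inj_of_lt_aleph0 (hk n)]
    calc a 0 + k (n + 1) + k n = a 0 + k n + k (n + 1) := add_right_comm _ _ _
      _ = a n + k (n + 1) + k 0 := by rw [ih, add_right_comm]
      _ = a (n + 1) + k 0 + k n := by rw [h, add_right_comm]

theorem LinearMap.rank_quotient_range_add_rank_ker_inf_range_pow (f : Module.End K V)
    (hf : Module.rank K (ker f) < ℵ₀) (n : ℕ) :
    Module.rank K (V ⧸ range f) + Module.rank K ↥(ker f ⊓ range (f ^ n)) =
      Module.rank K ((range (f ^ n)).map (range (f ^ (n + 1))).mkQ) + Module.rank K (ker f) := by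
  have h := Cardinal.add_eq_add_of_forall_add_succ_eq
    (a := fun m => Module.rank K ((range (f ^ m)).map (range (f ^ (m + 1))).mkQ))
    (k := fun m => Module.rank K ↥(ker f ⊓ range (f ^ m)))
    (fun m => (Submodule.rank_mono inf_le_left).trans_lt hf) (fun m => by
      have h := f.rank_map_mkQ_add_rank_ker_inf (f.range_pow_le_range_pow m.le_succ)
      rwa [f.map_range_pow, f.map_range_pow] at h) n
  rwa [range_pow_zero, inf_top_eq, zero_add, pow_one, rank_map_mkQ_top] at h

theorem LinearMap.finiteDimensional_quotient_range_pow (f : Module.End K V)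
    [FiniteDimensional K (V ⧸ range f)] (n : ℕ) : FiniteDimensional K (V ⧸ range (f ^ n)) := by
  induction n with
  | zero => rw [range_pow_zero]; infer_instance
  | succ n ih =>
    apply Module.rank_lt_aleph0_iff.mp
    have h := lift_rank_quot_map_le (f := f) (range (f ^ n))
    rw [lift_id, lift_id, lift_id, map_range_pow] at h
    exact h.trans_lt (add_lt_aleph0 (rank_lt_aleph0 K _) (rank_lt_aleph0 K _))

theorem finiteDimensional_and_finrank_eq_iff {M N : Type u} [AddCommGroup M] [Module K M]
    [AddCommGroup N] [Module K N] :
    (FiniteDimensional K M ∧ FiniteDimensional K N ∧ finrank K M = finrank K N) ↔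
      Module.rank K M < ℵ₀ ∧ Module.rank K M = Module.rank K N := by
  refine ⟨fun ⟨_, _, h⟩ => ⟨rank_lt_aleph0 K M, ?_⟩, fun ⟨hM, h⟩ => ?_⟩
  · rw [← finrank_eq_rank, ← finrank_eq_rank, h]
  · exact ⟨Module.rank_lt_aleph0_iff.mp hM, Module.rank_lt_aleph0_iff.mp (h ▸ hM),
      congrArg Cardinal.toNat h⟩

end LinearAlgebra

namespace SpectralPartition

variable {X : Type*} [NormedAddCommGroup X] [NormedSpace ℂ X]

theorem isWeyl_iff (S : X →L[ℂ] X) :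
    IsWeyl S ↔ IsClosed (range (S : X →ₗ[ℂ] X) : Set X) ∧
      Module.rank ℂ (ker (S : X →ₗ[ℂ] X)) < ℵ₀ ∧
      Module.rank ℂ (ker (S : X →ₗ[ℂ] X)) = Module.rank ℂ (X ⧸ range (S : X →ₗ[ℂ] X)) := by
  rw [IsWeyl, finiteDimensional_and_finrank_eq_iff]

theorem isBWeyl_iff [CompleteSpace X] (S : X →L[ℂ] X) :
    IsBWeyl S ↔ ∃ n : ℕ, IsClosed (range ((S : X →ₗ[ℂ] X) ^ n) : Set X) ∧
      IsClosed (range ((S : X →ₗ[ℂ] X) ^ (n + 1)) : Set X) ∧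
      Module.rank ℂ ↥(ker (S : X →ₗ[ℂ] X) ⊓ range ((S : X →ₗ[ℂ] X) ^ n)) < ℵ₀ ∧
      Module.rank ℂ ↥(ker (S : X →ₗ[ℂ] X) ⊓ range ((S : X →ₗ[ℂ] X) ^ n)) =
        Module.rank ℂ ((range ((S : X →ₗ[ℂ] X) ^ n)).map
          (range ((S : X →ₗ[ℂ] X) ^ (n + 1))).mkQ) := by
  refine exists_congr fun n => ?_
  rw [finiteDimensional_and_finrank_eq_iff, restr, rank_ker_restrict,
    rank_quotient_range_restrict, ContinuousLinearMap.toLinearMap_pow,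
    ContinuousLinearMap.toLinearMap_pow, map_range_pow]

theorem IsWeyl.isBWeyl [CompleteSpace X] {S : X →L[ℂ] X} (h : IsWeyl S) : IsBWeyl S := by
  rw [isWeyl_iff] at h
  rw [isBWeyl_iff]
  refine ⟨0, ?_⟩
  rw [range_pow_zero, inf_top_eq, zero_add, pow_one, rank_map_mkQ_top]
  exact ⟨isClosed_univ, h⟩

theorem IsBWeyl.isWeyl_of_finiteDimensional_ker [CompleteSpace X] {S : X →L[ℂ] X}
    (h : IsBWeyl S) (hker : FiniteDimensional ℂ (ker (S : X →ₗ[ℂ] X))) : IsWeyl S := by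
  obtain ⟨n, -, hclosed, hfin, hindex⟩ := (isBWeyl_iff S).mp h
  have hrank :
      Module.rank ℂ (X ⧸ range (S : X →ₗ[ℂ] X)) = Module.rank ℂ (ker (S : X →ₗ[ℂ] X)) := by
    have := (S : X →ₗ[ℂ] X).rank_quotient_range_add_rank_ker_inf_range_pow (rank_lt_aleph0 ℂ _) n
    rwa [← hindex, add_comm _ (Module.rank ℂ (ker _)), add_right_inj_of_lt_aleph0 hfin] at this
  have : FiniteDimensional ℂ (X ⧸ range (S : X →ₗ[ℂ] X)) :=
    Module.rank_lt_aleph0_iff.mp (hrank ▸ rank_lt_aleph0 ℂ _)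
  have := (S : X →ₗ[ℂ] X).finiteDimensional_quotient_range_pow (n + 1)
  refine (isWeyl_iff S).mpr ⟨?_, rank_lt_aleph0 ℂ _, hrank.symm⟩
  exact Submodule.isClosed_mono_of_finiteDimensional_quotient hclosed
    (pow_one (S : X →ₗ[ℂ] X) ▸ range_pow_le_range_pow _ (Nat.le_add_left 1 n))

theorem isWeyl_of_isUnit {S : X →L[ℂ] X} (h : IsUnit S) : IsWeyl S := by
  have hS : Function.Bijective (S : X →ₗ[ℂ] X) :=
    (Module.End.isUnit_iff _).mp (h.map ContinuousLinearMap.toLinearMapRingHom)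
  rw [isWeyl_iff, range_eq_top.mpr hS.2, ker_eq_bot.mpr hS.1]
  simpa using aleph0_pos

theorem σW_subset_spectrum (T : X →L[ℂ] X) : σW T ⊆ spectrum ℂ T := by
  intro l hW
  by_contra hl
  refine hW (isWeyl_of_isUnit ?_)
  rw [lam, ← neg_sub, ← Algebra.algebraMap_eq_smul_one]
  exact (spectrum.notMem_iff.mp hl).neg

end SpectralPartition

open SpectralPartition in
/-- Generalized Weyl's theorem implies Weyl's theorem. -/
theorem gen_weyl_implies_weyl {X : Type*} [NormedAddCommGroup X] [NormedSpace ℂ X]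
    [CompleteSpace X] (T : X →L[ℂ] X)
    (hU : spectrum ℂ T = σBW T ∪ Espec T) (hD : σBW T ∩ Espec T = ∅) :
    spectrum ℂ T = σW T ∪ E0spec T ∧ σW T ∩ E0spec T = ∅ := by
  have isBWeyl_of_mem_Espec {l : ℂ} (hl : l ∈ Espec T) : IsBWeyl (lam T l) :=
    not_not.mp fun hB => hD.subset ⟨hB, hl⟩
  refine ⟨Set.Subset.antisymm (fun l hl => ?_) (Set.union_subset (σW_subset_spectrum T)
    fun l hl => hl.1.2.1), Set.eq_empty_of_forall_notMem fun l ⟨hW, hl⟩ => ?_⟩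
  · by_cases hW : IsWeyl (lam T l)
    · have hE : l ∈ Espec T := (hU ▸ hl).resolve_left (not_not.mpr hW.isBWeyl)
      exact Or.inr ⟨hE, hW.2.1⟩
    · exact Or.inl hW
  · exact hW ((isBWeyl_of_mem_Espec hl.1).isWeyl_of_finiteDimensional_ker hl.2)
end
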